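/- arXiv:2303.05386 — 3 statements merged into one kernel-verified Lean document; each statement's English description precedes it below -/
import Mathlib

section
/- Let f = g + τh where g is proper convex lower semicontinuous and h is differentiable with L-Lipschitz gradient. For the proximal gradient step x⁺ = prox_{γg}(x − γτ∇h(x)) with step size γ ∈ (0, 1/(τL)], one has f(x⁺) ≤ f(x) − (1/(2γ) − τL/2)‖x⁺ − x‖². -/
/-!
Comparing the prox objective at `x⁺` with its value at `x` gives
`g(x⁺) ≤ g(x) − τ⟪∇h(x), x⁺ − x⟫ − ‖x⁺ − x‖² / (2γ)`, while the descent lemma bounds `τh(x⁺)` by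
`τ(h(x) + ⟪∇h(x), x⁺ − x⟫) + (τL/2)‖x⁺ − x‖²`. The linear terms cancel in the sum.
-/

open RealInnerProductSpace Set

variable {E : Type*} [NormedAddCommGroup E] [InnerProductSpace ℝ E]

theorem HasGradientAt.hasDerivAt_add_smul [CompleteSpace E] {h : E → ℝ} {p x v : E} {t : ℝ}
    (hh : HasGradientAt h p (x + t • v)) :
    HasDerivAt (fun s : ℝ => h (x + s • v)) ⟪p, v⟫ t := by
  have hline : HasDerivAt (fun s : ℝ => x + s • v) v t := by
    simpa using ((hasDerivAt_id t).smul_const v).const_add x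
  exact hh.hasFDerivAt.comp_hasDerivAt t hline

theorem le_add_inner_add_sq_of_lipschitz_gradient [CompleteSpace E] {h : E → ℝ} {h' : E → E}
    {L : ℝ} (hdiff : ∀ x, HasGradientAt h (h' x) x) (hlip : ∀ x z, ‖h' x - h' z‖ ≤ L * ‖x - z‖)
    (x y : E) :
    h y ≤ h x + ⟪h' x, y - x⟫ + L / 2 * ‖y - x‖ ^ 2 := by
  set v := y - x
  let φ : ℝ → ℝ := fun t => h (x + t • v) - t * ⟪h' x, v⟫ - L / 2 * t ^ 2 * ‖v‖ ^ 2
  have hφ' : ∀ t, HasDerivAt φ (⟪h' (x + t • v) - h' x, v⟫ - L * t * ‖v‖ ^ 2) t := by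
    intro t
    refine ((((hdiff _).hasDerivAt_add_smul).sub ((hasDerivAt_id t).mul_const _)).sub
      (((hasDerivAt_pow 2 t).const_mul (L / 2)).mul_const (‖v‖ ^ 2))).congr_deriv ?_
    simp only [inner_sub_left]
    ring
  have hφ'_nonpos : ∀ t, 0 ≤ t → ⟪h' (x + t • v) - h' x, v⟫ - L * t * ‖v‖ ^ 2 ≤ 0 := by
    intro t ht
    have := (real_inner_le_norm _ _).trans
      (mul_le_mul_of_nonneg_right (hlip (x + t • v) x) (norm_nonneg v))
    rw [add_sub_cancel_left, norm_smul, Real.norm_of_nonneg ht] at this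
    linarith
  have hanti : AntitoneOn φ (Icc 0 1) :=
    antitoneOn_of_hasDerivWithinAt_nonpos (convex_Icc 0 1)
      (fun t _ => (hφ' t).continuousAt.continuousWithinAt)
      (fun t _ => (hφ' t).hasDerivWithinAt)
      (fun t ht => hφ'_nonpos t (interior_subset ht).1)
  have := hanti (left_mem_Icc.2 zero_le_one) (right_mem_Icc.2 zero_le_one) zero_le_one
  simp only [φ, zero_smul, add_zero, one_smul, add_sub_cancel, v] at this
  linarith

theorem IsMinOn.le_sub_inner_sub_sq_of_prox {g : E → ℝ} {γ : ℝ} (hγ : 0 < γ) {x p u : E}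
    (hu : IsMinOn (fun v => (1 / 2) * ‖v - (x - γ • p)‖ ^ 2 + γ * g v) univ u) :
    g u ≤ g x - ⟪p, u - x⟫ - 1 / (2 * γ) * ‖u - x‖ ^ 2 := by
  have hcmp := isMinOn_univ_iff.1 hu x
  rw [sub_sub_cancel, show u - (x - γ • p) = (u - x) + γ • p by abel, norm_add_sq_real,
    real_inner_smul_right, real_inner_comm] at hcmp
  rw [← mul_le_mul_iff_right₀ hγ]
  field_simp
  linarith

theorem pgm_sufficient_decrease_general (n : ℕ)
    (g : EuclideanSpace ℝ (Fin n) → ℝ)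
    (h : EuclideanSpace ℝ (Fin n) → ℝ)
    (h' : EuclideanSpace ℝ (Fin n) → EuclideanSpace ℝ (Fin n))
    (hdiff : ∀ x, HasGradientAt h (h' x) x)
    (L τ γ : ℝ) (hτ : 0 < τ) (hγ : 0 < γ)
    (hlip : ∀ x z, ‖h' x - h' z‖ ≤ L * ‖x - z‖)
    (f : EuclideanSpace ℝ (Fin n) → ℝ) (hf : ∀ x, f x = g x + τ * h x)
    (x xplus : EuclideanSpace ℝ (Fin n))
    (hprox : IsMinOn (fun u => (1/2) * ‖u - (x - (γ * τ) • h' x)‖ ^ 2 + γ * g u)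
        Set.univ xplus) :
    f xplus ≤ f x - (1 / (2 * γ) - τ * L / 2) * ‖xplus - x‖ ^ 2 := by
  rw [mul_smul] at hprox
  have hg := hprox.le_sub_inner_sub_sq_of_prox hγ
  have hh := mul_le_mul_of_nonneg_left
    (le_add_inner_add_sq_of_lipschitz_gradient hdiff hlip x xplus) hτ.le
  rw [real_inner_smul_left] at hg
  rw [hf, hf]
  linarith

/-- Sufficient decrease for one proximal gradient step: if `x⁺` minimizes the prox
objective at `x − γτ∇h(x)` and `γ ∈ (0, 1/(τL)]`, then
`f(x⁺) ≤ f(x) − (1/(2γ) − τL/2)‖x⁺ − x‖²` for `f = g + τh`. -/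
theorem pgm_sufficient_decrease (n : ℕ)
    (g : EuclideanSpace ℝ (Fin n) → ℝ)
    (hg_conv : ConvexOn ℝ Set.univ g) (hg_lsc : LowerSemicontinuous g)
    (h : EuclideanSpace ℝ (Fin n) → ℝ)
    (h' : EuclideanSpace ℝ (Fin n) → EuclideanSpace ℝ (Fin n))
    (hdiff : ∀ x, HasGradientAt h (h' x) x)
    (L τ γ : ℝ) (hL : 0 < L) (hτ : 0 < τ) (hγ : 0 < γ) (hγle : γ ≤ 1 / (τ * L))
    (hlip : ∀ x z, ‖h' x - h' z‖ ≤ L * ‖x - z‖)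
    (f : EuclideanSpace ℝ (Fin n) → ℝ) (hf : ∀ x, f x = g x + τ * h x)
    (x xplus : EuclideanSpace ℝ (Fin n))
    (hprox : IsMinOn (fun u => (1/2) * ‖u - (x - (γ * τ) • h' x)‖ ^ 2 + γ * g u)
        Set.univ xplus) :
    f xplus ≤ f x - (1 / (2 * γ) - τ * L / 2) * ‖xplus - x‖ ^ 2 :=
  pgm_sufficient_decrease_general n g h h' hdiff L τ γ hτ hγ hlip f hf x xplus hprox
end

section
/- Under the assumptions of the proximal gradient method with γ ∈ (0, 1/(τL)) and f bounded below, the sequence f(xᵏ) generated by xᵏ = prox_{γg}(xᵏ⁻¹ − γτ∇h(xᵏ⁻¹)) is monotonically nonincreasing and ‖xᵏ − xᵏ⁻¹‖ → 0. -/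
open Filter InnerProductSpace

local notation "⟪" x ", " y "⟫" => @inner ℝ _ _ x y

/-- Squared norm of a convex combination. -/
lemma pgm_combo_norm_sq {E : Type*} [NormedAddCommGroup E] [InnerProductSpace ℝ E]
    (p q : E) (t : ℝ) :
    ‖(1 - t) • p + t • q‖ ^ 2
      = (1 - t) * ‖p‖ ^ 2 + t * ‖q‖ ^ 2 - t * (1 - t) * ‖p - q‖ ^ 2 := by
  rw [norm_add_sq_real, norm_sub_sq_real, norm_smul, norm_smul,
    real_inner_smul_left, real_inner_smul_right, Real.norm_eq_abs, Real.norm_eq_abs,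
    mul_pow, mul_pow, sq_abs, sq_abs]
  ring

/-- Strong-convexity inequality for the minimizer of `u ↦ ½‖u-y‖² + γ g u`. -/
lemma pgm_strong_min {E : Type*} [NormedAddCommGroup E] [InnerProductSpace ℝ E]
    (g : E → ℝ) (hg_conv : ConvexOn ℝ Set.univ g) (γ : ℝ) (hγ : 0 ≤ γ)
    (y a : E)
    (hmin : IsMinOn (fun u => (1/2) * ‖u - y‖ ^ 2 + γ * g u) Set.univ a) (u : E) :
    (1/2) * ‖a - y‖ ^ 2 + γ * g a + (1/2) * ‖u - a‖ ^ 2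
      ≤ (1/2) * ‖u - y‖ ^ 2 + γ * g u := by
  apply le_of_forall_pos_le_add
  intro ε hε
  set S : ℝ := ‖u - a‖ ^ 2 with hS
  have hS0 : 0 ≤ S := by positivity
  set t : ℝ := min (ε / (S + 1)) (1/2) with ht
  have ht0 : 0 < t := lt_min (by positivity) (by norm_num)
  have ht1 : t < 1 := lt_of_le_of_lt (min_le_right _ _) (by norm_num)
  have htS : (1/2) * t * S ≤ ε := by
    have h1 : t ≤ ε / (S + 1) := min_le_left _ _
    have h2 : t * S ≤ (ε / (S + 1)) * (S + 1) := by
      have : t * S ≤ (ε / (S+1)) * S := mul_le_mul_of_nonneg_right h1 hS0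
      nlinarith [div_nonneg hε.le (by linarith : (0:ℝ) ≤ S + 1)]
    rw [div_mul_cancel₀] at h2
    · nlinarith
    · linarith
  -- evaluate the minimality at the convex combination
  set m : E := (1 - t) • a + t • u with hm
  have hmem : m ∈ Set.univ := Set.mem_univ _
  have hmin' := isMinOn_iff.mp hmin m hmem
  have hconv := hg_conv.2 (Set.mem_univ a) (Set.mem_univ u)
    (by linarith : (0:ℝ) ≤ 1 - t) ht0.le (by ring)
  have hmy : m - y = (1 - t) • (a - y) + t • (u - y) := by
    simp only [hm, smul_sub, sub_smul, one_smul]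
    abel
  have hid : ‖m - y‖ ^ 2
      = (1 - t) * ‖a - y‖ ^ 2 + t * ‖u - y‖ ^ 2 - t * (1 - t) * ‖a - u‖ ^ 2 := by
    rw [hmy, pgm_combo_norm_sq]
    congr 2
    abel_nf
  have hau : ‖a - u‖ ^ 2 = S := by rw [hS, ← norm_neg (u - a)]; congr 1; abel_nf
  rw [hau] at hid
  simp only [smul_eq_mul] at hconv
  -- hmin' : ½‖a-y‖² + γ g a ≤ ½‖m-y‖² + γ g m
  have key : (1/2) * ‖a - y‖ ^ 2 + γ * g a
      ≤ (1/2) * ((1 - t) * ‖a - y‖ ^ 2 + t * ‖u - y‖ ^ 2 - t * (1 - t) * S)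
        + γ * ((1 - t) * g a + t * g u) := by
    calc (1/2) * ‖a - y‖ ^ 2 + γ * g a ≤ (1/2) * ‖m - y‖ ^ 2 + γ * g m := hmin'
    _ ≤ _ := by
        rw [hid]
        have : γ * g m ≤ γ * ((1 - t) * g a + t * g u) :=
          mul_le_mul_of_nonneg_left hconv hγ
        linarith
  -- divide by t
  have hdiv : (1/2) * ‖a - y‖ ^ 2 + γ * g a + (1/2) * (1 - t) * S
      ≤ (1/2) * ‖u - y‖ ^ 2 + γ * g u := by
    nlinarith [key, ht0]
  nlinarith [hdiv, htS, ht0, ht1]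

/-- Descent-type estimate from a Lipschitz gradient (crude constant `L`). -/
lemma pgm_descent {E : Type*} [NormedAddCommGroup E] [InnerProductSpace ℝ E]
    [CompleteSpace E]
    (h : E → ℝ) (h' : E → E) (hdiff : ∀ x, HasGradientAt h (h' x) x)
    (L : ℝ) (hL : 0 ≤ L) (hlip : ∀ x z, ‖h' x - h' z‖ ≤ L * ‖x - z‖) (a b : E) :
    |h b - h a - ⟪h' a, b - a⟫| ≤ L * ‖b - a‖ * ‖b - a‖ := by
  have hseg : ∀ z ∈ segment ℝ a b, ‖z - a‖ ≤ ‖b - a‖ := by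
    rintro z ⟨s, t, hs, ht, hst, rfl⟩
    have : s • a + t • b - a = t • (b - a) := by
      have hs1 : s = 1 - t := by linarith
      rw [hs1]; rw [sub_smul, one_smul, smul_sub]; abel
    rw [this, norm_smul, Real.norm_eq_abs, abs_of_nonneg ht]
    nlinarith [norm_nonneg (b - a)]
  have hbound : ∀ z ∈ segment ℝ a b,
      ‖(toDual ℝ E) (h' z) - (toDual ℝ E) (h' a)‖ ≤ L * ‖b - a‖ := by
    intro z hz
    rw [← map_sub, (toDual ℝ E).norm_map]
    calc ‖h' z - h' a‖ ≤ L * ‖z - a‖ := hlip z a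
    _ ≤ L * ‖b - a‖ := mul_le_mul_of_nonneg_left (hseg z hz) hL
  have := (convex_segment a b).norm_image_sub_le_of_norm_hasFDerivWithin_le'
    (f' := fun z => (toDual ℝ E) (h' z)) (φ := (toDual ℝ E) (h' a))
    (fun z _ => (hdiff z).hasFDerivAt.hasFDerivWithinAt) hbound
    (left_mem_segment ℝ a b) (right_mem_segment ℝ a b)
  rw [toDual_apply_apply] at this
  calc |h b - h a - ⟪h' a, b - a⟫| = ‖h b - h a - ⟪h' a, b - a⟫‖ :=
      (Real.norm_eq_abs _).symm
  _ ≤ L * ‖b - a‖ * ‖b - a‖ := this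

/-- Proximal gradient method with `γ ∈ (0, 1/(τL))` and `f = g + τh` bounded below:
the objective values are monotonically nonincreasing and `‖xᵏ⁺¹ − xᵏ‖ → 0`. -/
theorem pgm_monotone_and_residual_to_zero (n : ℕ)
    (g : EuclideanSpace ℝ (Fin n) → ℝ)
    (hg_conv : ConvexOn ℝ Set.univ g) (hg_lsc : LowerSemicontinuous g)
    (h : EuclideanSpace ℝ (Fin n) → ℝ)
    (h' : EuclideanSpace ℝ (Fin n) → EuclideanSpace ℝ (Fin n))
    (hdiff : ∀ x, HasGradientAt h (h' x) x)
    (L τ γ : ℝ) (hL : 0 < L) (hτ : 0 < τ) (hγ : 0 < γ) (hγlt : γ < 1 / (τ * L))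
    (hlip : ∀ x z, ‖h' x - h' z‖ ≤ L * ‖x - z‖)
    (f : EuclideanSpace ℝ (Fin n) → ℝ) (hf : ∀ x, f x = g x + τ * h x)
    (B : ℝ) (hbdd : ∀ x, B ≤ f x)
    (x : ℕ → EuclideanSpace ℝ (Fin n))
    (hiter : ∀ k : ℕ,
      IsMinOn (fun u => (1/2) * ‖u - (x k - (γ * τ) • h' (x k))‖ ^ 2 + γ * g u)
        Set.univ (x (k + 1))) :
    (∀ k : ℕ, f (x (k + 1)) ≤ f (x k)) ∧
      Tendsto (fun k => ‖x (k + 1) - x k‖) atTop (nhds 0) := by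
  have hτL : 0 < τ * L := mul_pos hτ hL
  have hc : 0 < 1/γ - τ * L := by
    rw [lt_div_iff₀ hτL] at hγlt
    rw [sub_pos, lt_div_iff₀ hγ]
    nlinarith
  have key : ∀ k, f (x (k+1)) + (1/γ - τ*L) * ‖x (k+1) - x k‖^2 ≤ f (x k) := by
    intro k
    have hsm := pgm_strong_min g hg_conv γ hγ.le (x k - (γ * τ) • h' (x k))
      (x (k+1)) (hiter k) (x k)
    have hay : x (k+1) - (x k - (γ * τ) • h' (x k))
        = (x (k+1) - x k) + (γ*τ) • h' (x k) := by abel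
    have hby : x k - (x k - (γ * τ) • h' (x k)) = (γ*τ) • h' (x k) := by abel
    have h1 : ‖x (k+1) - (x k - (γ * τ) • h' (x k))‖^2
        = ‖x (k+1) - x k‖^2 + 2*((γ*τ) * ⟪x (k+1) - x k, h' (x k)⟫)
          + (γ*τ)^2 * ‖h' (x k)‖^2 := by
      rw [hay, norm_add_sq_real, real_inner_smul_right, norm_smul, Real.norm_eq_abs,
        mul_pow, sq_abs]
    have h2 : ‖x k - (x k - (γ * τ) • h' (x k))‖^2 = (γ*τ)^2 * ‖h' (x k)‖^2 := by
      rw [hby, norm_smul, Real.norm_eq_abs, mul_pow, sq_abs]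
    have hba : ‖x k - x (k+1)‖^2 = ‖x (k+1) - x k‖^2 := by
      rw [← norm_neg (x (k+1) - x k)]; congr 1; abel_nf
    rw [h1, h2, hba] at hsm
    have hga : γ * g (x (k+1)) + ‖x (k+1) - x k‖^2
        + (γ*τ) * ⟪x (k+1) - x k, h' (x k)⟫ ≤ γ * g (x k) := by linarith
    have hginv : g (x (k+1)) + (1/γ) * ‖x (k+1) - x k‖^2
        + τ * ⟪x (k+1) - x k, h' (x k)⟫ ≤ g (x k) := by
      have hmul := mul_le_mul_of_nonneg_left hga (le_of_lt (one_div_pos.mpr hγ))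
      have hinv : (1/γ) * γ = 1 := by field_simp
      nlinarith [hmul, hinv]
    have hdes := pgm_descent h h' hdiff L hL.le hlip (x k) (x (k+1))
    rw [real_inner_comm] at hdes
    have habs := (abs_le.mp hdes).2
    have hτh : τ * h (x (k+1)) ≤ τ * h (x k)
        + τ * ⟪x (k+1) - x k, h' (x k)⟫ + τ * (L * ‖x (k+1) - x k‖^2) := by
      nlinarith [mul_le_mul_of_nonneg_left habs hτ.le, sq ‖x (k+1) - x k‖]
    rw [hf, hf]
    linarith [hginv, hτh]
  constructor
  · intro k
    have hpos : 0 ≤ (1/γ - τ*L) * ‖x (k+1) - x k‖^2 := by positivity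
    linarith [key k]
  · have hsum : ∀ N, ∑ k ∈ Finset.range N, (1/γ - τ*L) * ‖x (k+1) - x k‖^2
        ≤ f (x 0) - B := by
      intro N
      have htel : ∑ k ∈ Finset.range N, (1/γ - τ*L) * ‖x (k+1) - x k‖^2
          ≤ ∑ k ∈ Finset.range N, (f (x k) - f (x (k+1))) :=
        Finset.sum_le_sum (fun k _ => by linarith [key k])
      rw [Finset.sum_range_sub' (fun k => f (x k))] at htel
      linarith [hbdd (x N)]
    have hsummable : Summable (fun k => (1/γ - τ*L) * ‖x (k+1) - x k‖^2) :=
      summable_of_sum_range_le (fun k => by positivity) hsum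
    have h0 := hsummable.tendsto_atTop_zero
    have h1 : Tendsto (fun k => ‖x (k+1) - x k‖^2) atTop (nhds 0) := by
      have heq : (fun k => ‖x (k+1) - x k‖^2)
          = fun k => (1/(1/γ - τ*L)) * ((1/γ - τ*L) * ‖x (k+1) - x k‖^2) := by
        funext k; rw [← mul_assoc, one_div_mul_cancel (ne_of_gt hc), one_mul]
      rw [heq]
      simpa using h0.const_mul (1/(1/γ - τ*L))
    have hsq : Tendsto (fun k => Real.sqrt (‖x (k+1) - x k‖^2)) atTop
        (nhds (Real.sqrt 0)) := (Real.continuous_sqrt.tendsto 0).comp h1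
    have heq2 : (fun k => Real.sqrt (‖x (k+1) - x k‖^2)) = fun k => ‖x (k+1) - x k‖ :=
      funext fun k => Real.sqrt_sq (norm_nonneg _)
    rw [heq2, Real.sqrt_zero] at hsq
    exact hsq
end

section
/- If D : ℝⁿ → ℝⁿ is differentiable, locally homogeneous (i.e., J_D(x)x = D(x) for all x) and has symmetric Jacobian, then the RED functional h(x) = (1/2)xᵀ(x − D(x)) satisfies ∇h(x) = x − D(x). -/
/-!
For any `R` with derivative `A` at `x`, the function `y ↦ ⟪y, R y⟫` has gradient
`R x + A† x` at `x`. Apply this to the residual `R = id - D`, whose derivative is `id - J x`: symmetry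
turns `(id - J x)† x` into `x - J x`, and homogeneity turns that into `x - D x = R x`. So
`⟪y, R y⟫` has gradient `2 (x - D x)`, and `h` is half of it.
-/

open RealInnerProductSpace

section

variable {E : Type*} [NormedAddCommGroup E] [InnerProductSpace ℝ E] [CompleteSpace E]

theorem HasGradientAt.const_mul {f : E → ℝ} {g x : E} (hf : HasGradientAt f g x) (c : ℝ) :
    HasGradientAt (fun y => c * f y) (c • g) x := by
  rw [hasGradientAt_iff_hasFDerivAt, map_smul] at *
  exact hf.const_mul c

theorem HasFDerivAt.hasGradientAt_inner_self_apply {f : E → E} {f' : E →L[ℝ] E} {x : E}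
    (hf : HasFDerivAt f f' x) :
    HasGradientAt (fun y => ⟪y, f y⟫) (f x + ContinuousLinearMap.adjoint f' x) x := by
  have hid : HasFDerivAt (fun y : E => y) (ContinuousLinearMap.id ℝ E) x := hasFDerivAt_id x
  rw [hasGradientAt_iff_hasFDerivAt]
  refine (hid.inner ℝ hf).congr_fderiv (ContinuousLinearMap.ext fun v => ?_)
  simp only [InnerProductSpace.toDual_apply_apply, ContinuousLinearMap.coe_comp,
    Function.comp_apply, ContinuousLinearMap.prod_apply, fderivInnerCLM_apply,
    ContinuousLinearMap.id_apply]
  rw [inner_add_left, ContinuousLinearMap.adjoint_inner_left, real_inner_comm v, add_comm]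

end

/-- If `D` is differentiable, locally homogeneous (`J_D(x)x = D(x)`) and has symmetric
Jacobian, then the RED functional `h(x) = (1/2)⟪x, x − D(x)⟫` satisfies
`∇h(x) = x − D(x)`. -/
theorem red_gradient_homogeneous_symmetric (n : ℕ)
    (D : EuclideanSpace ℝ (Fin n) → EuclideanSpace ℝ (Fin n))
    (J : EuclideanSpace ℝ (Fin n) →
      EuclideanSpace ℝ (Fin n) →L[ℝ] EuclideanSpace ℝ (Fin n))
    (hD : ∀ x, HasFDerivAt D (J x) x)
    (hhom : ∀ x, (J x) x = D x)
    (hsym : ∀ x, ContinuousLinearMap.adjoint (J x) = J x)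
    (h : EuclideanSpace ℝ (Fin n) → ℝ)
    (hh : ∀ x, h x = (1/2) * ⟪x, x - D x⟫) :
    ∀ x, HasGradientAt h (x - D x) x := by
  intro x
  have hres : HasFDerivAt (fun y => y - D y) (ContinuousLinearMap.id ℝ _ - J x) x :=
    (hasFDerivAt_id x).sub (hD x)
  have hadj : ContinuousLinearMap.adjoint (ContinuousLinearMap.id ℝ _ - J x) x = x - D x := by
    rw [map_sub, ContinuousLinearMap.adjoint_id, hsym, sub_apply,
      ContinuousLinearMap.id_apply, hhom]
  have hgrad := hres.hasGradientAt_inner_self_apply.const_mul (1 / 2)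
  rw [hadj, ← two_smul ℝ, smul_smul, one_div_mul_cancel two_ne_zero, one_smul] at hgrad
  simpa only [← hh] using hgrad
end
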